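/- arXiv:2008.11050 — 2 statements merged into one kernel-verified Lean document; each statement's English description precedes it below -/
import Mathlib

section
/- With K̂_n, P_{n+1}, Q_{n+1} as above and ||K_n^0|| <= c < 1: if f in L^2(mu_{n+1} x du) satisfies ||K̂_n f||^2 >= (1 - epsilon) ||f||^2 for some 0 <= epsilon <= 1, then ||P_{n+1} f||^2 <= (epsilon/(1 - c^2)) ||f||^2, equivalently ||Q_{n+1} f||^2 >= (1 - epsilon/(1-c^2)) ||f||^2. -/
open MeasureTheory Matrix Filter Topology ProbabilityTheory

noncomputable section

abbrev SL (m : ℕ) := Matrix.SpecialLinearGroup (Fin m) ℝ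

abbrev Sph (m : ℕ) := Metric.sphere (0 : EuclideanSpace ℝ (Fin m)) 1

/-- The linear action of `g ∈ SL(m,ℝ)` on `ℝ^m`. -/
def mvec {m : ℕ} (g : SL m) (u : EuclideanSpace ℝ (Fin m)) : EuclideanSpace ℝ (Fin m) :=
  Matrix.toEuclideanLin (g : Matrix (Fin m) (Fin m) ℝ) u

open scoped Classical in
/-- The projective action `g.u = gu/‖gu‖` of `SL(m,ℝ)` on the unit sphere. -/
def projAct {m : ℕ} (g : SL m) (u : Sph m) : Sph m :=
  if h : mvec g u.1 = 0 then u else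
    ⟨‖mvec g u.1‖⁻¹ • mvec g u.1, by
      rw [mem_sphere_zero_iff_norm, norm_smul, norm_inv, norm_norm,
        inv_mul_cancel₀ (norm_ne_zero_iff.mpr h)]⟩

/-- The normalized uniform (Lebesgue) measure on the unit sphere `S^{m-1}`. -/
def sphμ (m : ℕ) : Measure (Sph m) :=
  ((volume : Measure (EuclideanSpace ℝ (Fin m))).toSphere Set.univ)⁻¹ •
    (volume : Measure (EuclideanSpace ℝ (Fin m))).toSphere

/-!
Split `f = Pf + Qf`, where `Qf u = ∫ f(·, u) dμₙ₊₁` is the fibrewise mean. On each fibre the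
kernel preserves means, so `K̂ Qf` is the constant `Qf u`, orthogonal to `K̂ Pf`, and the
contraction hypothesis bounds `‖K̂ Pf‖` by `c ‖Pf‖`. Integrating over the sphere,
`(1 - ε) ‖f‖² ≤ ‖K̂ f‖² ≤ c² ‖Pf‖² + ‖Qf‖² = ‖f‖² - (1 - c²) ‖Pf‖²`.
-/

lemma sq_integral_le_integral_sq {Ω : Type*} [MeasurableSpace Ω] {μ : Measure Ω}
    [IsProbabilityMeasure μ] {F : Ω → ℝ} (hF : MemLp F 2 μ) :
    (∫ x, F x ∂μ) ^ 2 ≤ ∫ x, F x ^ 2 ∂μ := by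
  have h := variance_eq_sub hF
  simp only [Pi.pow_apply] at h
  linarith [variance_nonneg F μ]

section MarkovKernel

variable {α β : Type*} [MeasurableSpace α] [MeasurableSpace β] {μ : Measure α}
  {k : Kernel α β} {F : β → ℝ}

lemma integral_comp_eq_integral_integral (hF : Integrable F (k ∘ₘ μ)) :
    ∫ y, F y ∂(k ∘ₘ μ) = ∫ x, ∫ y, F y ∂k x ∂μ := by
  rw [Measure.comp_eq_comp_const_apply] at hF ⊢
  simpa using Kernel.integral_comp hF

lemma memLp_two_integral_kernel [IsMarkovKernel k] (hFm : Measurable F)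
    (hF : MemLp F 2 (k ∘ₘ μ)) : MemLp (fun x => ∫ y, F y ∂k x) 2 μ := by
  have hsq : Integrable (fun y => F y ^ 2) (k ∘ₘ μ) := hF.integrable_sq
  have hKF : StronglyMeasurable fun x => ∫ y, F y ∂k x := hFm.stronglyMeasurable.integral_kernel
  refine (memLp_two_iff_integrable_sq hKF.aestronglyMeasurable).2 <|
    (Measure.integrable_integral_norm_of_integrable_comp hsq).mono'
      (hKF.pow 2).aestronglyMeasurable ?_
  filter_upwards [Measure.ae_integrable_of_integrable_comp hsq] with x hx
  simp only [Real.norm_eq_abs, abs_pow, sq_abs]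
  exact sq_integral_le_integral_sq ((memLp_two_iff_integrable_sq hFm.aestronglyMeasurable).2 hx)

lemma integral_sq_integral_kernel_le [IsProbabilityMeasure μ] [IsMarkovKernel k] {c : ℝ}
    (hK : ∀ φ : β → ℝ, Measurable φ → MemLp φ 2 (k ∘ₘ μ) → ∫ y, φ y ∂(k ∘ₘ μ) = 0 →
      ∫ x, (∫ y, φ y ∂k x) ^ 2 ∂μ ≤ c ^ 2 * ∫ y, φ y ^ 2 ∂(k ∘ₘ μ))
    (hFm : Measurable F) (hF : MemLp F 2 (k ∘ₘ μ)) :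
    ∫ x, (∫ y, F y ∂k x) ^ 2 ∂μ ≤ c ^ 2 * Var[F; k ∘ₘ μ] + (∫ y, F y ∂(k ∘ₘ μ)) ^ 2 := by
  set t := ∫ y, F y ∂(k ∘ₘ μ)
  have hF1 : Integrable F (k ∘ₘ μ) := hF.integrable one_le_two
  have hKF := memLp_two_integral_kernel hFm hF
  have hmean : ∫ x, ∫ y, F y ∂k x ∂μ = t := (integral_comp_eq_integral_integral hF1).symm
  have hcentre : (fun x => ∫ y, F y ∂k x - t) =ᵐ[μ] fun x => ∫ y, (F y - t) ∂k x := by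
    filter_upwards [Measure.ae_integrable_of_integrable_comp hF1] with x hx
    simp [integral_sub hx (integrable_const t)]
  have hcentre0 : ∫ y, (F y - t) ∂(k ∘ₘ μ) = 0 := by
    simp [integral_sub hF1 (integrable_const t), t]
  calc ∫ x, (∫ y, F y ∂k x) ^ 2 ∂μ
      = ∫ x, (∫ y, F y ∂k x - t) ^ 2 ∂μ + t ^ 2 := by
        rw [← hmean, ← variance_eq_integral hKF.aemeasurable, variance_eq_sub hKF]
        simp
    _ = ∫ x, (∫ y, (F y - t) ∂k x) ^ 2 ∂μ + t ^ 2 := by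
        congr 1
        exact integral_congr_ae (hcentre.fun_comp (· ^ 2))
    _ ≤ c ^ 2 * ∫ y, (F y - t) ^ 2 ∂(k ∘ₘ μ) + t ^ 2 := by
        gcongr
        exact hK _ (hFm.sub_const t) (hF.sub (memLp_const t)) hcentre0
    _ = c ^ 2 * Var[F; k ∘ₘ μ] + t ^ 2 := by
        rw [variance_eq_integral hFm.aemeasurable]

end MarkovKernel

section Product

variable {α β : Type*} [MeasurableSpace α] [MeasurableSpace β] {μ : Measure α} {ν : Measure β}

lemma integrable_prod_of_ae_integral_le [SFinite μ] [SFinite ν] {H : α × β → ℝ} (hH0 : 0 ≤ H)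
    (hH : AEStronglyMeasurable H (μ.prod ν)) {R : β → ℝ} (hR : Integrable R ν)
    (hfib : ∀ᵐ y ∂ν, Integrable (fun x => H (x, y)) μ ∧ ∫ x, H (x, y) ∂μ ≤ R y) :
    Integrable H (μ.prod ν) := by
  refine (integrable_prod_iff' hH).2 ⟨hfib.mono fun y hy => hy.1, ?_⟩
  refine hR.mono' hH.prod_swap.norm.integral_prod_right' ?_
  filter_upwards [hfib] with y hy
  have hH0' : ∀ x, ‖H (x, y)‖ = H (x, y) := fun x => Real.norm_of_nonneg (hH0 _)
  simpa only [hH0', Real.norm_of_nonneg (integral_nonneg fun x => hH0 (x, y))] using hy.2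

lemma ae_memLp_two_prod_left [SFinite μ] [SFinite ν] {f : α × β → ℝ} (hf : Measurable f)
    (hf2 : MemLp f 2 (μ.prod ν)) :
    ∀ᵐ y ∂ν, MemLp (fun x => f (x, y)) 2 μ := by
  filter_upwards [hf2.integrable_sq.prod_left_ae] with y hy
  exact (memLp_two_iff_integrable_sq (hf.comp measurable_prodMk_right).aestronglyMeasurable).2 hy

variable [IsProbabilityMeasure μ] [SFinite ν] {f : α × β → ℝ}

lemma integrable_sq_integral_prod_left (hf : Measurable f) (hf2 : MemLp f 2 (μ.prod ν)) :
    Integrable (fun y => (∫ x, f (x, y) ∂μ) ^ 2) ν := by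
  refine hf2.integrable_sq.integral_prod_right.mono'
    (hf.stronglyMeasurable.integral_prod_left'.pow 2).aestronglyMeasurable ?_
  filter_upwards [ae_memLp_two_prod_left hf hf2] with y hy
  simpa [Real.norm_eq_abs] using sq_integral_le_integral_sq hy

lemma variance_prod_left_ae_eq (hf : Measurable f) (hf2 : MemLp f 2 (μ.prod ν)) :
    (fun y => Var[fun x => f (x, y); μ])
      =ᵐ[ν] fun y => ∫ x, f (x, y) ^ 2 ∂μ - (∫ x, f (x, y) ∂μ) ^ 2 := by
  filter_upwards [ae_memLp_two_prod_left hf hf2] with y hy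
  simpa using variance_eq_sub hy

lemma integrable_variance_prod_left (hf : Measurable f) (hf2 : MemLp f 2 (μ.prod ν)) :
    Integrable (fun y => Var[fun x => f (x, y); μ]) ν :=
  (hf2.integrable_sq.integral_prod_right.sub (integrable_sq_integral_prod_left hf hf2)).congr
    (variance_prod_left_ae_eq hf hf2).symm

lemma integral_variance_prod_left (hf : Measurable f) (hf2 : MemLp f 2 (μ.prod ν)) :
    ∫ y, Var[fun x => f (x, y); μ] ∂ν
      = ∫ p, f p ^ 2 ∂(μ.prod ν) - ∫ y, (∫ x, f (x, y) ∂μ) ^ 2 ∂ν := by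
  rw [integral_congr_ae (variance_prod_left_ae_eq hf hf2),
    integral_sub hf2.integrable_sq.integral_prod_right (integrable_sq_integral_prod_left hf hf2),
    integral_prod_symm _ hf2.integrable_sq]

lemma integral_sq_sub_integral_prod_left (hf : Measurable f) (hf2 : MemLp f 2 (μ.prod ν)) :
    ∫ p, (f p - ∫ x, f (x, p.2) ∂μ) ^ 2 ∂(μ.prod ν) = ∫ y, Var[fun x => f (x, y); μ] ∂ν := by
  have hfib := ae_memLp_two_prod_left hf hf2
  have hint : Integrable (fun p => (f p - ∫ x, f (x, p.2) ∂μ) ^ 2) (μ.prod ν) := by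
    refine integrable_prod_of_ae_integral_le (fun p => sq_nonneg _) ?_
      (integrable_variance_prod_left hf hf2) ?_
    · exact ((hf.stronglyMeasurable.sub
        (hf.stronglyMeasurable.integral_prod_left'.comp_measurable measurable_snd)).pow
          2).aestronglyMeasurable
    · filter_upwards [hfib] with y hy
      exact ⟨(hy.sub (memLp_const _)).integrable_sq, (variance_eq_integral hy.aemeasurable).ge⟩
  rw [integral_prod_symm _ hint]
  refine integral_congr_ae ?_
  filter_upwards [hfib] with y hy
  exact (variance_eq_integral hy.aemeasurable).symm

end Product

instance (m : ℕ) : SFinite (sphμ m) := by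
  unfold sphμ
  infer_instance

lemma integral_sq_integral_kernel_prod_le {α β γ : Type*} [MeasurableSpace α] [MeasurableSpace β]
    [MeasurableSpace γ] {μ : Measure α} [IsProbabilityMeasure μ] {k : Kernel α β}
    [IsMarkovKernel k] {ν : Measure γ} [SFinite ν] {c : ℝ}
    (hK : ∀ φ : β → ℝ, Measurable φ → MemLp φ 2 (k ∘ₘ μ) → ∫ y, φ y ∂(k ∘ₘ μ) = 0 →
      ∫ x, (∫ y, φ y ∂k x) ^ 2 ∂μ ≤ c ^ 2 * ∫ y, φ y ^ 2 ∂(k ∘ₘ μ))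
    {f : β × γ → ℝ} (hf : Measurable f) (hf2 : MemLp f 2 ((k ∘ₘ μ).prod ν)) :
    ∫ p, (∫ y, f (y, p.2) ∂k p.1) ^ 2 ∂(μ.prod ν)
      ≤ c ^ 2 * ∫ z, Var[fun y => f (y, z); k ∘ₘ μ] ∂ν
        + ∫ z, (∫ y, f (y, z) ∂(k ∘ₘ μ)) ^ 2 ∂ν := by
  have hV := integrable_variance_prod_left hf hf2
  have hg := integrable_sq_integral_prod_left hf hf2
  have hfib (z : γ) : Measurable fun y => f (y, z) := hf.comp measurable_prodMk_right
  have hKf : StronglyMeasurable fun p : α × γ => ∫ y, f (y, p.2) ∂k p.1 := by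
    simpa using (hf.comp (measurable_snd.prodMk measurable_fst.snd)).stronglyMeasurable
      |>.integral_kernel_prod_right' (κ := Kernel.prodMkRight γ k)
  have hint : Integrable (fun p : α × γ => (∫ y, f (y, p.2) ∂k p.1) ^ 2) (μ.prod ν) := by
    refine integrable_prod_of_ae_integral_le (fun p => sq_nonneg _)
      (hKf.pow 2).aestronglyMeasurable ((hV.const_mul (c ^ 2)).add hg) ?_
    filter_upwards [ae_memLp_two_prod_left hf hf2] with z hz
    exact ⟨(memLp_two_integral_kernel (hfib z) hz).integrable_sq,
      integral_sq_integral_kernel_le hK (hfib z) hz⟩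
  rw [integral_prod_symm _ hint, ← integral_const_mul, ← integral_add (hV.const_mul _) hg]
  refine integral_mono_ae hint.integral_prod_right ((hV.const_mul _).add hg) ?_
  filter_upwards [ae_memLp_two_prod_left hf hf2] with z hz
  exact integral_sq_integral_kernel_le hK (hfib z) hz

theorem stmt16_general (m : ℕ) (X : Type*) [MeasurableSpace X]
    (μn μn1 : Measure X) [IsProbabilityMeasure μn] [IsProbabilityMeasure μn1]
    (k : Kernel X X) [IsMarkovKernel k]
    (hcompat : μn1 = μn.bind (fun x => k x))
    (c : ℝ) (hc0 : 0 ≤ c) (hc1 : c < 1)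
    (hK : ∀ φ : X → ℝ, Measurable φ → MemLp φ 2 μn1 → ∫ x, φ x ∂μn1 = 0 →
      ∫ x, (∫ y, φ y ∂(k x)) ^ 2 ∂μn ≤ c ^ 2 * ∫ x, (φ x) ^ 2 ∂μn1)
    (ε : ℝ)
    (f : X × Sph m → ℝ) (hf : Measurable f) (hf2 : MemLp f 2 (μn1.prod (sphμ m)))
    (hlow : ∫ p, (∫ y, f (y, p.2) ∂(k p.1)) ^ 2 ∂(μn.prod (sphμ m))
      ≥ (1 - ε) * ∫ p, (f p) ^ 2 ∂(μn1.prod (sphμ m))) :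
    ∫ p, (f p - ∫ y, f (y, p.2) ∂μn1) ^ 2 ∂(μn1.prod (sphμ m))
        ≤ (ε / (1 - c ^ 2)) * ∫ p, (f p) ^ 2 ∂(μn1.prod (sphμ m)) ∧
      ∫ p, (∫ y, f (y, p.2) ∂μn1) ^ 2 ∂(μn1.prod (sphμ m))
        ≥ (1 - ε / (1 - c ^ 2)) * ∫ p, (f p) ^ 2 ∂(μn1.prod (sphμ m)) := by
  subst hcompat
  set μ' := μn.bind fun x => k x
  set T := ∫ p, f p ^ 2 ∂μ'.prod (sphμ m)
  set G := ∫ z, (∫ y, f (y, z) ∂μ') ^ 2 ∂(sphμ m)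
  have hP : ∫ p, (f p - ∫ y, f (y, p.2) ∂μ') ^ 2 ∂μ'.prod (sphμ m) = T - G :=
    (integral_sq_sub_integral_prod_left hf hf2).trans (integral_variance_prod_left hf hf2)
  have hQ : ∫ p, (∫ y, f (y, p.2) ∂μ') ^ 2 ∂μ'.prod (sphμ m) = G := by
    simpa using integral_fun_snd (μ := μ') (fun z => (∫ y, f (y, z) ∂μ') ^ 2)
  have hKbound : (1 - ε) * T ≤ c ^ 2 * (T - G) + G := by
    have := integral_sq_integral_kernel_prod_le hK hf hf2
    rw [integral_variance_prod_left hf hf2] at this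
    exact hlow.le.trans this
  have hc : 0 < 1 - c ^ 2 := by nlinarith
  have hPT : T - G ≤ ε / (1 - c ^ 2) * T := by
    rw [div_mul_eq_mul_div, le_div_iff₀ hc]
    linarith
  rw [hP, hQ]
  exact ⟨hPT, by linarith⟩

/-- If `‖K̂ₙ f‖² ≥ (1-ε)‖f‖²` and `‖Kₙ⁰‖ ≤ c < 1`, then
`‖P_{n+1} f‖² ≤ (ε/(1-c²))‖f‖²`, equivalently `‖Q_{n+1} f‖² ≥ (1 - ε/(1-c²))‖f‖²`. -/
theorem stmt16 (m : ℕ) (X : Type*) [MeasurableSpace X]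
    (μn μn1 : Measure X) [IsProbabilityMeasure μn] [IsProbabilityMeasure μn1]
    (k : Kernel X X) [IsMarkovKernel k]
    (hcompat : μn1 = μn.bind (fun x => k x))
    (c : ℝ) (hc0 : 0 ≤ c) (hc1 : c < 1)
    (hK : ∀ φ : X → ℝ, Measurable φ → MemLp φ 2 μn1 → ∫ x, φ x ∂μn1 = 0 →
      ∫ x, (∫ y, φ y ∂(k x)) ^ 2 ∂μn ≤ c ^ 2 * ∫ x, (φ x) ^ 2 ∂μn1)
    (ε : ℝ) (hε0 : 0 ≤ ε) (hε1 : ε ≤ 1)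
    (f : X × Sph m → ℝ) (hf : Measurable f) (hf2 : MemLp f 2 (μn1.prod (sphμ m)))
    (hlow : ∫ p, (∫ y, f (y, p.2) ∂(k p.1)) ^ 2 ∂(μn.prod (sphμ m))
      ≥ (1 - ε) * ∫ p, (f p) ^ 2 ∂(μn1.prod (sphμ m))) :
    ∫ p, (f p - ∫ y, f (y, p.2) ∂μn1) ^ 2 ∂(μn1.prod (sphμ m))
        ≤ (ε / (1 - c ^ 2)) * ∫ p, (f p) ^ 2 ∂(μn1.prod (sphμ m)) ∧
      ∫ p, (∫ y, f (y, p.2) ∂μn1) ^ 2 ∂(μn1.prod (sphμ m))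
        ≥ (1 - ε / (1 - c ^ 2)) * ∫ p, (f p) ^ 2 ∂(μn1.prod (sphμ m)) :=
  stmt16_general m X μn μn1 k hcompat c hc0 hc1 hK ε f hf hf2 hlow

end
end

section
/- Let k_1(x,dy),...,k_r(x,dy) be Markov kernels on a measurable space X with compatible marginals mu_1,...,mu_{r+1} (i.e., mu_{j+1} = mu_j k_j), and suppose the restriction of the first transition operator K_1 to mean-zero functions in L^2(mu_2) has norm at most c < 1. Consider the composed chain step: for f in L^2 of the product measure mu_2(dy_1) k_2(y_1,dy_2)...k_r(y_{r-1},dy_r) on X^r with ∫ f d(product measure) = 0, define (K~ f)(x) = ∫ k_1(x,dy_1) k_2(y_1,dy_2)...k_r(y_{r-1},dy_r) f(y_1,...,y_r). Then ||K~ f||_{L^2(mu_1)} <= c ||f||. -/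
/-!
Integrating out the last `r - 1` steps of the chain turns `F` into the function
`φ y₁ = ∫ F dν_{y₁}` of the first coordinate alone, where `ν_{y₁}` is the law of the chain
started at `y₁`. Since `ρ = ν ∘ μ₂` and `μ₂ = k₁ ∘ μ₁`, `φ` has `μ₂`-mean `∫ F dρ = 0`, and
`K̃ F = K₁ φ`, so the contraction of `K₁` applies to `φ`. Jensen's inequality on each `ν_{y₁}`
gives `‖φ‖_{L²(μ₂)} ≤ ‖F‖_{L²(ρ)}`.
-/

open MeasureTheory ProbabilityTheory

noncomputable section

/-- The distribution on trajectories `(y_j, y_{j+1}, …)` of the chain with kernels `kⱼ`,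
started from position `j` in state `x`, run for `count` steps, recorded in the tuple `acc`
(coordinate `i` holds `y_i`). -/
def mChain {X : Type*} [MeasurableSpace X] (k : ℕ → Kernel X X) :
    ℕ → ℕ → X → (ℕ → X) → Measure (ℕ → X)
  | 0, _, _, acc => Measure.dirac acc
  | (c + 1), j, x, acc =>
      ((k j) x).bind (fun y => mChain k c (j + 1) y (Function.update acc j y))

open Function

namespace MeasureTheory.Measure

variable {α β γ : Type*} [MeasurableSpace α] [MeasurableSpace β] [MeasurableSpace γ]

lemma map_bind (m : Measure α) {f : α → Measure β} {g : β → γ} (hf : Measurable f)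
    (hg : Measurable g) : (m.bind f).map g = m.bind fun a ↦ (f a).map g := by
  rw [bind, bind, ← join_map_map hg, map_map (measurable_map _ hg) hf]
  rfl

end MeasureTheory.Measure

section KernelAverage

variable {α β : Type*} [MeasurableSpace α] [MeasurableSpace β]
  {μ : Measure α} {κ : Kernel α β} {f : β → ℝ}

lemma integral_comp_eq_integral_integral_s19 (hf : Integrable f (κ ∘ₘ μ)) :
    ∫ b, f b ∂(κ ∘ₘ μ) = ∫ a, ∫ b, f b ∂κ a ∂μ := by
  rw [Measure.comp_eq_comp_const_apply] at hf ⊢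
  rw [Kernel.integral_comp hf, Kernel.const_apply]

lemma sq_integral_le_integral_sq_s19 {P : Measure β} [IsProbabilityMeasure P] (hf : MemLp f 2 P) :
    (∫ b, f b ∂P) ^ 2 ≤ ∫ b, f b ^ 2 ∂P := by
  have h := variance_nonneg f P
  rw [variance_eq_sub hf] at h
  simpa [Pi.pow_apply] using h

lemma integrable_integral_sq_kernel (hf : MemLp f 2 (κ ∘ₘ μ)) :
    Integrable (fun a ↦ ∫ b, f b ^ 2 ∂κ a) μ := by
  simpa only [norm_pow, Real.norm_eq_abs, sq_abs] using
    Measure.integrable_integral_norm_of_integrable_comp hf.integrable_sq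

variable [IsMarkovKernel κ]

lemma ae_sq_integral_le_integral_sq (hfm : Measurable f) (hf : MemLp f 2 (κ ∘ₘ μ)) :
    ∀ᵐ a ∂μ, (∫ b, f b ∂κ a) ^ 2 ≤ ∫ b, f b ^ 2 ∂κ a := by
  filter_upwards [Measure.ae_integrable_of_integrable_comp hf.integrable_sq] with a ha
  exact sq_integral_le_integral_sq_s19 ((memLp_two_iff_integrable_sq hfm.aestronglyMeasurable).2 ha)

lemma memLp_two_integral_kernel_s19 (hfm : Measurable f) (hf : MemLp f 2 (κ ∘ₘ μ)) :
    MemLp (fun a ↦ ∫ b, f b ∂κ a) 2 μ := by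
  have hmeas := hfm.stronglyMeasurable.integral_kernel (κ := κ)
  refine (memLp_two_iff_integrable_sq hmeas.aestronglyMeasurable).2 <|
    (integrable_integral_sq_kernel hf).mono' (hmeas.measurable.pow_const 2).aestronglyMeasurable ?_
  filter_upwards [ae_sq_integral_le_integral_sq hfm hf] with a ha
  rwa [Real.norm_of_nonneg (sq_nonneg _)]

lemma integral_sq_integral_kernel_le_s19 (hfm : Measurable f) (hf : MemLp f 2 (κ ∘ₘ μ)) :
    ∫ a, (∫ b, f b ∂κ a) ^ 2 ∂μ ≤ ∫ b, f b ^ 2 ∂(κ ∘ₘ μ) := by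
  rw [integral_comp_eq_integral_integral_s19 hf.integrable_sq]
  exact integral_mono_ae (memLp_two_integral_kernel_s19 hfm hf).integrable_sq
    (integrable_integral_sq_kernel hf) (ae_sq_integral_le_integral_sq hfm hf)

end KernelAverage

namespace mChain

variable {X : Type*} [MeasurableSpace X] (k : ℕ → Kernel X X)

section SFinite

variable [∀ j, IsSFiniteKernel (k j)]

lemma measurable_uncurry (c j : ℕ) :
    Measurable fun p : X × (ℕ → X) ↦ mChain k c j p.1 p.2 := by
  induction c generalizing j with
  | zero => exact Measure.measurable_dirac.comp measurable_snd
  | succ c ih =>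
    refine Measure.measurable_of_measurable_coe _ fun s hs ↦ ?_
    have hstep : Measurable fun q : (X × (ℕ → X)) × X ↦
        mChain k c (j + 1) q.2 (update q.1.2 j q.2) :=
      (ih (j + 1)).comp (measurable_snd.prodMk (measurable_update'.comp
        ((measurable_snd.comp measurable_fst).prodMk measurable_snd)))
    have hbind : ∀ p : X × (ℕ → X), mChain k (c + 1) j p.1 p.2 s
        = ∫⁻ y, mChain k c (j + 1) y (update p.2 j y) s ∂(k j p.1) := fun p ↦
      Measure.bind_apply hs (hstep.comp measurable_prodMk_left).aemeasurable
    simp_rw [hbind]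
    exact ((Measure.measurable_coe hs).comp hstep).lintegral_kernel_prod_right'
      (κ := (k j).comap Prod.fst measurable_fst)

lemma measurable_tail (c j : ℕ) (acc : ℕ → X) :
    Measurable fun y ↦ mChain k c (j + 1) y (update acc j y) :=
  (measurable_uncurry k c (j + 1)).comp (measurable_id.prodMk (measurable_update acc))

def kernel (c j : ℕ) : Kernel X (ℕ → X) where
  toFun x := mChain k c j x fun _ ↦ x
  measurable' := (measurable_uncurry k c j).comp
    (measurable_id.prodMk (measurable_pi_lambda _ fun _ ↦ measurable_id))

lemma map_congr {β : Type*} [MeasurableSpace β] {F : (ℕ → X) → β} (hF : Measurable F)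
    {S : Set ℕ} (hdep : ∀ a b : ℕ → X, (∀ i ∈ S, a i = b i) → F a = F b) (c j : ℕ) (x : X)
    -- the chain overwrites the coordinates `j, …, c + j - 1`; the others come from `acc`
    {acc acc' : ℕ → X} (hacc : ∀ i ∈ S, i < j ∨ c + j ≤ i → acc i = acc' i) :
    (mChain k c j x acc).map F = (mChain k c j x acc').map F := by
  induction c generalizing j x acc acc' with
  | zero =>
    rw [mChain, mChain, Measure.map_dirac' hF, Measure.map_dirac' hF,
      hdep _ _ fun i hi ↦ hacc i hi (by omega)]
  | succ c ih =>
    rw [mChain, mChain, Measure.map_bind _ (measurable_tail k c j acc) hF,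
      Measure.map_bind _ (measurable_tail k c j acc') hF]
    congr 1
    funext y
    refine ih (j + 1) y fun i hi hij ↦ ?_
    rcases eq_or_ne i j with rfl | hne
    · simp
    · simp only [update_of_ne hne]
      exact hacc i hi (by omega)

lemma map_succ_eq_comp {β : Type*} [MeasurableSpace β] {F : (ℕ → X) → β} (hF : Measurable F)
    {c j : ℕ} (hdep : ∀ a b : ℕ → X, (∀ i, j ≤ i → i ≤ c + j → a i = b i) → F a = F b) (x : X) :
    (mChain k (c + 1) j x fun _ ↦ x).map F = ((kernel k c (j + 1) ∘ₖ k j) x).map F := by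
  rw [Kernel.comp_apply, mChain, Measure.map_bind _ (measurable_tail k c j _) hF,
    Measure.map_bind _ (kernel k c (j + 1)).measurable hF]
  congr 1
  funext y
  refine map_congr k hF (S := Set.Icc j (c + j))
    (fun a b h ↦ hdep a b fun i h₁ h₂ ↦ h i ⟨h₁, h₂⟩) c (j + 1) y fun i hi hij ↦ ?_
  obtain rfl : i = j := by grind
  simp

lemma integral_succ_eq_comp {F : (ℕ → X) → ℝ} (hF : Measurable F) {c j : ℕ}
    (hdep : ∀ a b : ℕ → X, (∀ i, j ≤ i → i ≤ c + j → a i = b i) → F a = F b) (x : X) :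
    ∫ v, F v ∂(mChain k (c + 1) j x fun _ ↦ x) = ∫ v, F v ∂(kernel k c (j + 1) ∘ₖ k j) x := by
  have hid {P : Measure (ℕ → X)} : AEStronglyMeasurable (fun t : ℝ ↦ t) (P.map F) :=
    aestronglyMeasurable_id
  rw [← integral_map hF.aemeasurable hid, map_succ_eq_comp k hF hdep,
    integral_map hF.aemeasurable hid]

end SFinite

variable [∀ j, IsMarkovKernel (k j)]

instance isProbabilityMeasure (c j : ℕ) (x : X) (acc : ℕ → X) :
    IsProbabilityMeasure (mChain k c j x acc) := by
  induction c generalizing j x acc with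
  | zero => exact Measure.dirac.isProbabilityMeasure
  | succ c ih =>
    exact isProbabilityMeasure_bind (measurable_tail k c j acc).aemeasurable
      (.of_forall fun y ↦ ih (j + 1) y _)

instance (c j : ℕ) : IsMarkovKernel (kernel k c j) := ⟨fun x ↦ isProbabilityMeasure k c j x _⟩

end mChain

theorem stmt19_general (X : Type*) [MeasurableSpace X] (r : ℕ) (hr : 1 ≤ r)
    (k : ℕ → Kernel X X) [∀ j, IsMarkovKernel (k j)]
    (μ : ℕ → Measure X) (hprob : ∀ j, IsProbabilityMeasure (μ j))
    (hcompat : ∀ j, 1 ≤ j → j ≤ r → μ (j + 1) = (μ j).bind (fun x => (k j) x))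
    (c : ℝ)
    (hK : ∀ φ : X → ℝ, Measurable φ → MemLp φ 2 (μ 2) → ∫ x, φ x ∂(μ 2) = 0 →
      ∫ x, (∫ y, φ y ∂((k 1) x)) ^ 2 ∂(μ 1) ≤ c ^ 2 * ∫ x, (φ x) ^ 2 ∂(μ 2))
    (F : (ℕ → X) → ℝ) (hF : Measurable F)
    (hdep : ∀ a b : ℕ → X, (∀ i, 1 ≤ i → i ≤ r → a i = b i) → F a = F b)
    (ρ : Measure (ℕ → X))
    (hρ : ρ = (μ 2).bind (fun y₁ => mChain k (r - 1) 2 y₁ (fun _ => y₁)))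
    (hF2 : MemLp F 2 ρ) (hmean : ∫ v, F v ∂ρ = 0) :
    ∫ x, (∫ v, F v ∂(mChain k r 1 x (fun _ => x))) ^ 2 ∂(μ 1)
      ≤ c ^ 2 * ∫ v, (F v) ^ 2 ∂ρ := by
  obtain ⟨q, rfl⟩ : ∃ q, r = q + 1 := ⟨r - 1, by omega⟩
  have := hprob 2
  set ν := mChain.kernel k q 2
  obtain rfl : ρ = ν ∘ₘ μ 2 := by rw [hρ, Nat.add_sub_cancel]; rfl
  have hμ₂ : μ 2 = k 1 ∘ₘ μ 1 := hcompat 1 le_rfl (by omega)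
  have hFint : Integrable F (ν ∘ₘ μ 2) := hF2.integrable one_le_two
  set φ : X → ℝ := fun y ↦ ∫ v, F v ∂ν y
  have hφ₀ : ∫ y, φ y ∂μ 2 = 0 := integral_comp_eq_integral_integral_s19 hFint ▸ hmean
  have hstep : ∀ᵐ x ∂μ 1, ∫ v, F v ∂(mChain k (q + 1) 1 x fun _ ↦ x) = ∫ y, φ y ∂k 1 x := by
    rw [hμ₂, Measure.comp_assoc] at hFint
    filter_upwards [Measure.ae_integrable_of_integrable_comp hFint] with x hx
    rw [mChain.integral_succ_eq_comp k hF hdep, Kernel.integral_comp hx]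
  calc ∫ x, (∫ v, F v ∂(mChain k (q + 1) 1 x fun _ ↦ x)) ^ 2 ∂μ 1
      = ∫ x, (∫ y, φ y ∂k 1 x) ^ 2 ∂μ 1 :=
        integral_congr_ae (hstep.mono fun x hx ↦ congrArg (· ^ 2) hx)
    _ ≤ c ^ 2 * ∫ y, φ y ^ 2 ∂μ 2 :=
        hK φ hF.stronglyMeasurable.integral_kernel.measurable
          (memLp_two_integral_kernel_s19 hF hF2) hφ₀
    _ ≤ c ^ 2 * ∫ v, F v ^ 2 ∂(ν ∘ₘ μ 2) := by
        gcongr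
        exact integral_sq_integral_kernel_le_s19 hF hF2

/-- Contraction of the composed chain step: if `‖K₁⁰‖ ≤ c < 1` on mean-zero functions in
`L²(μ₂)`, then for `f` mean-zero and square-integrable with respect to the trajectory measure
`μ₂(dy₁)k₂(y₁,dy₂)⋯k_r(y_{r-1},dy_r)`, the composed operator
`(K̃ f)(x) = ∫ k₁(x,dy₁)k₂(y₁,dy₂)⋯k_r(y_{r-1},dy_r) f(y₁,…,y_r)` satisfies
`‖K̃ f‖_{L²(μ₁)} ≤ c ‖f‖`. -/
theorem stmt19 (X : Type*) [MeasurableSpace X] (r : ℕ) (hr : 1 ≤ r)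
    (k : ℕ → Kernel X X) [∀ j, IsMarkovKernel (k j)]
    (μ : ℕ → Measure X) (hprob : ∀ j, IsProbabilityMeasure (μ j))
    (hcompat : ∀ j, 1 ≤ j → j ≤ r → μ (j + 1) = (μ j).bind (fun x => (k j) x))
    (c : ℝ) (hc0 : 0 ≤ c) (hc1 : c < 1)
    (hK : ∀ φ : X → ℝ, Measurable φ → MemLp φ 2 (μ 2) → ∫ x, φ x ∂(μ 2) = 0 →
      ∫ x, (∫ y, φ y ∂((k 1) x)) ^ 2 ∂(μ 1) ≤ c ^ 2 * ∫ x, (φ x) ^ 2 ∂(μ 2))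
    (F : (ℕ → X) → ℝ) (hF : Measurable F)
    (hdep : ∀ a b : ℕ → X, (∀ i, 1 ≤ i → i ≤ r → a i = b i) → F a = F b)
    (ρ : Measure (ℕ → X))
    (hρ : ρ = (μ 2).bind (fun y₁ => mChain k (r - 1) 2 y₁ (fun _ => y₁)))
    (hF2 : MemLp F 2 ρ) (hmean : ∫ v, F v ∂ρ = 0) :
    ∫ x, (∫ v, F v ∂(mChain k r 1 x (fun _ => x))) ^ 2 ∂(μ 1)
      ≤ c ^ 2 * ∫ v, (F v) ^ 2 ∂ρ :=
  stmt19_general X r hr k μ hprob hcompat c hK F hF hdep ρ hρ hF2 hmean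

end
end
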